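/- Fix a real c > 0 and for each integer n ≥ 1 set 𝒱*(n) = 4·sin²(π/(2n+4)) and 𝒞*(n) = (2/(n+2))·cot²(π/(2n+4)) − 1. Then lim_{n→∞} [2 − (2 − 𝒱*(n))·sinc(π/(c·𝒞*(n) + 1))] / 𝒱*(n) = 1 + π⁴/(192·c²), where sinc(x) = sin(x)/x. -/

import Mathlib

open Real Filter

/-- `sinc x = sin x / x` with `sinc 0 = 1`. -/
noncomputable def sinc (x : ℝ) : ℝ := if x = 0 then 1 else Real.sin x / x

/-- The unconstrained minimum variance `𝒱*(n) = 4 sin²(π/(2n+4))`. -/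
noncomputable def Vstar (n : ℕ) : ℝ := 4 * Real.sin (π / (2 * n + 4)) ^ 2

/-- The coherence of the optimal probe state,
`𝒞*(n) = (2/(n+2))·cot²(π/(2n+4)) − 1`. -/
noncomputable def Cstar (n : ℕ) : ℝ :=
  2 / ((n : ℝ) + 2) * Real.cot (π / (2 * n + 4)) ^ 2 - 1

/-!
With `θ = π/(2n+4)` we have `𝒱* = 4 sin²θ ~ 4θ²` and `θ·𝒞* → 4/π`, so the sinc argument
`x = π/(c𝒞*+1)` satisfies `x/θ → π²/(4c)`. Writing the ratio as
`sinc x + 2(1 - sinc x)/𝒱*` and using `1 - sinc x ~ x²/6` gives the limit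
`1 + (1/12)(π²/(4c))² = 1 + π⁴/(192c²)`.
-/

open Topology

lemma sin_eq_mul_sinc (x : ℝ) : sin x = x * Real.sinc x := by
  rcases eq_or_ne x 0 with rfl | hx
  · simp
  · rw [Real.sinc_of_ne_zero hx, mul_div_cancel₀ _ hx]

lemma abs_one_sub_sinc_div_sq_sub_le {x : ℝ} (hx : x ≠ 0) (hx1 : |x| ≤ 1) :
    |(1 - Real.sinc x) / x ^ 2 - 1 / 6| ≤ |x| ^ 2 / 100 := by
  have hrem : (1 - Real.sinc x) / x ^ 2 - 1 / 6 = -(sin x - (x - x ^ 3 / 6)) / x ^ 3 := by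
    rw [Real.sinc_of_ne_zero hx]
    field_simp
    ring
  rw [hrem, abs_div, abs_neg, abs_pow, div_le_iff₀ (by positivity)]
  calc _ ≤ |x| ^ 5 / 100 := sin_bound hx1
    _ = |x| ^ 2 / 100 * |x| ^ 3 := by ring

lemma tendsto_one_sub_sinc_div_sq :
    Tendsto (fun x => (1 - Real.sinc x) / x ^ 2) (𝓝[≠] 0) (𝓝 (1 / 6)) := by
  rw [← tendsto_sub_nhds_zero_iff]
  have hbound : Tendsto (fun x : ℝ => |x| ^ 2 / 100) (𝓝[≠] 0) (𝓝 0) := by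
    have : Continuous (fun x : ℝ => |x| ^ 2 / 100) := by fun_prop
    simpa using (this.tendsto 0).mono_left nhdsWithin_le_nhds
  refine squeeze_zero_norm' ?_ hbound
  filter_upwards [self_mem_nhdsWithin, nhdsWithin_le_nhds (Icc_mem_nhds neg_one_lt_zero one_pos)]
    with x hx hx1
  exact abs_one_sub_sinc_div_sq_sub_le hx (abs_le.2 hx1)

lemma normalized_variance_eq {θ x s : ℝ} (hθ : θ ≠ 0) (hsin : sin θ ≠ 0) (hx : x ≠ 0) :
    (2 - (2 - 4 * sin θ ^ 2) * s) / (4 * sin θ ^ 2)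
      = s + (1 - s) / x ^ 2 * (x / θ) ^ 2 / (2 * Real.sinc θ ^ 2) := by
  rw [sin_eq_mul_sinc] at hsin ⊢
  have hsinc : Real.sinc θ ≠ 0 := right_ne_zero_of_mul hsin
  field_simp
  ring

noncomputable def theta (n : ℕ) : ℝ := π / (2 * n + 4)

lemma theta_pos (n : ℕ) : 0 < theta n := by unfold theta; positivity

lemma sin_theta_pos (n : ℕ) : 0 < sin (theta n) := by
  refine sin_pos_of_pos_of_lt_pi (theta_pos n) (div_lt_self pi_pos ?_)
  linarith [(n.cast_nonneg : (0 : ℝ) ≤ n)]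

lemma tendsto_theta_atTop : Tendsto theta atTop (𝓝 0) :=
  tendsto_const_nhds.div_atTop <| tendsto_atTop_add_const_right _ _ <|
    tendsto_natCast_atTop_atTop.const_mul_atTop two_pos

lemma theta_mul_Cstar (n : ℕ) :
    theta n * Cstar n = 4 / π * (cos (theta n) / Real.sinc (theta n)) ^ 2 - theta n := by
  have hsin := (sin_theta_pos n).ne'
  have hθ := (theta_pos n).ne'
  rw [sin_eq_mul_sinc] at hsin
  have hsinc : Real.sinc (theta n) ≠ 0 := right_ne_zero_of_mul hsin
  rw [Cstar, cot_eq_cos_div_sin, sin_eq_mul_sinc, ← theta]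
  have hn : (n : ℝ) + 2 = π / (2 * theta n) := by
    unfold theta
    field_simp
    ring
  rw [hn]
  field_simp
  ring

lemma tendsto_theta_mul_Cstar : Tendsto (fun n => theta n * Cstar n) atTop (𝓝 (4 / π)) := by
  have hcont : ContinuousAt (fun θ => 4 / π * (cos θ / Real.sinc θ) ^ 2 - θ) 0 :=
    (((continuous_cos.continuousAt.div continuous_sinc.continuousAt (by simp)).pow 2).const_mul
      _).sub continuousAt_id
  simpa [Function.comp_def, theta_mul_Cstar] using hcont.tendsto.comp tendsto_theta_atTop

/-- The asymptotic normalized-variance curve of the twirled probe state at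
coherence ratio `c`: `lim_n [2 − (2 − 𝒱*)·sinc(π/(c𝒞*+1))]/𝒱* = 1 + π⁴/(192c²)`. -/
theorem twirled_state_asymptotic_curve (c : ℝ) (hc : 0 < c) :
    Tendsto (fun n : ℕ =>
        (2 - (2 - Vstar n) * _root_.sinc (π / (c * Cstar n + 1))) / Vstar n)
      atTop (nhds (1 + π ^ 4 / (192 * c ^ 2))) := by
  set x : ℕ → ℝ := fun n => π / (c * Cstar n + 1)
  have hden : Tendsto (fun n => theta n * (c * Cstar n + 1)) atTop (𝓝 (4 * c / π)) := by
    convert (tendsto_theta_mul_Cstar.const_mul c).add tendsto_theta_atTop using 2 <;> ring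
  have hratio : Tendsto (fun n => x n / theta n) atTop (𝓝 (π ^ 2 / (4 * c))) := by
    have h := (tendsto_const_nhds (x := π)).div hden (by positivity)
    rw [show π / (4 * c / π) = π ^ 2 / (4 * c) by field_simp] at h
    exact h.congr fun n => by rw [Pi.div_apply, div_div, mul_comm]
  have hx : Tendsto x atTop (𝓝[≠] 0) := by
    refine tendsto_nhdsWithin_iff.2 ⟨?_, ?_⟩
    · simpa using (hratio.mul tendsto_theta_atTop).congr
        fun n => div_mul_cancel₀ _ (theta_pos n).ne'
    · filter_upwards [hratio.eventually (eventually_gt_nhds (by positivity))] with n hn hx0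
      rw [hx0, zero_div] at hn
      exact lt_irrefl _ hn
  have hsinc_theta : Tendsto (fun n => Real.sinc (theta n)) atTop (𝓝 1) := by
    simpa [Function.comp_def] using (continuous_sinc.tendsto 0).comp tendsto_theta_atTop
  have hsinc_x : Tendsto (fun n => Real.sinc (x n)) atTop (𝓝 1) := by
    simpa [Function.comp_def] using
      (continuous_sinc.tendsto 0).comp (hx.mono_right nhdsWithin_le_nhds)
  have hlim := hsinc_x.add (((tendsto_one_sub_sinc_div_sq.comp hx).mul (hratio.pow 2)).div
    ((hsinc_theta.pow 2).const_mul 2) (by norm_num))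
  convert hlim.congr' ?_ using 2
  · field_simp
    ring
  · filter_upwards [hx self_mem_nhdsWithin] with n hxn
    -- the frozen `sinc` and `Vstar n` unfold to `Real.sinc` and `4 * sin (theta n) ^ 2`
    exact (normalized_variance_eq (theta_pos n).ne' (sin_theta_pos n).ne' hxn).symm
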